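/- For the pure delay map F, if each of two points X = (x₀,…,x_τ) and Y = (y₀,…,y_τ) has coordinates lying in a common compact interval I on which f is Lipschitz with constant L ≥ 1, then ‖F^{(n)}(X) − F^{(n)}(Y)‖_∞ ≤ L^{⌈n/(τ+1)⌉} ‖X − Y‖_∞ for all n ∈ ℕ. -/
import Mathlib


def pd (f : ℝ → ℝ) (τ : ℕ) (x : Fin (τ + 1) → ℝ) : Fin (τ + 1) → ℝ :=
  fun i => if _h : i.val = 0 then f (x (Fin.last τ)) else x ⟨i.val - 1, by have := i.isLt; omega⟩

lemma pd_structure (f : ℝ → ℝ) (τ : ℕ) (n : ℕ) (i : Fin (τ + 1)) :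
    ∃ k : ℕ, ∃ j : Fin (τ + 1), k ≤ (n + τ - i.val) / (τ + 1) ∧
      ∀ Z : Fin (τ + 1) → ℝ, (pd f τ)^[n] Z i = f^[k] (Z j) := by
  induction n generalizing i with
  | zero => exact ⟨0, i, Nat.zero_le _, fun Z => rfl⟩
  | succ n ih =>
    by_cases h0 : i.val = 0
    · obtain ⟨k, j, hk, hZ⟩ := ih (Fin.last τ)
      refine ⟨k + 1, j, ?_, fun Z => ?_⟩
      · simp only [Fin.val_last] at hk
        have h1 : n + τ - τ = n := by omega
        rw [h1] at hk
        have h2 : (n + 1 + τ) / (τ + 1) = n / (τ + 1) + 1 := by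
          rw [show n + 1 + τ = n + (τ + 1) by omega, Nat.add_div_right _ (by omega)]
        rw [show n + 1 + τ - i.val = n + 1 + τ by omega]
        omega
      · rw [Function.iterate_succ_apply', pd]
        simp only [h0, dif_pos]
        rw [hZ Z, Function.iterate_succ_apply']
    · obtain ⟨k, j, hk, hZ⟩ := ih ⟨i.val - 1, by have := i.isLt; omega⟩
      refine ⟨k, j, ?_, fun Z => ?_⟩
      · have hi := i.isLt
        have h1 : n + τ - (i.val - 1) = n + 1 + τ - i.val := by omega
        simp only at hk
        rw [h1] at hk
        exact hk
      · rw [Function.iterate_succ_apply']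
        show (pd f τ) ((pd f τ)^[n] Z) i = _
        rw [pd]
        simp only [h0, dif_neg]
        exact hZ Z

lemma iter_mem (f : ℝ → ℝ) (a b : ℝ) (hfI : Set.MapsTo f (Set.Icc a b) (Set.Icc a b))
    (k : ℕ) : ∀ x ∈ Set.Icc a b, f^[k] x ∈ Set.Icc a b := fun x hx => hfI.iterate k hx

lemma iter_lip (f : ℝ → ℝ) (a b : ℝ) (hfI : Set.MapsTo f (Set.Icc a b) (Set.Icc a b))
    (L : ℝ) (hL : 1 ≤ L)
    (hlip : ∀ x ∈ Set.Icc a b, ∀ y ∈ Set.Icc a b, |f x - f y| ≤ L * |x - y|) (k : ℕ) :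
    ∀ x ∈ Set.Icc a b, ∀ y ∈ Set.Icc a b, |f^[k] x - f^[k] y| ≤ L ^ k * |x - y| := by
  induction k with
  | zero => intro x hx y hy; simp
  | succ k ih =>
    intro x hx y hy
    rw [Function.iterate_succ_apply', Function.iterate_succ_apply']
    calc |f (f^[k] x) - f (f^[k] y)| ≤ L * |f^[k] x - f^[k] y| :=
          hlip _ (iter_mem f a b hfI k x hx) _ (iter_mem f a b hfI k y hy)
      _ ≤ L * (L ^ k * |x - y|) := by
          apply mul_le_mul_of_nonneg_left (ih x hx y hy) (by linarith)
      _ = L ^ (k + 1) * |x - y| := by ring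

/-- If f is L-Lipschitz (L ≥ 1) on a forward-invariant compact interval I containing
all coordinates of X and Y, then
‖F^n(X) − F^n(Y)‖_∞ ≤ L^⌈n/(τ+1)⌉ ‖X − Y‖_∞, where ⌈n/(τ+1)⌉ = (n+τ)/(τ+1) in
natural division. -/
theorem pd_lipschitz_iterates (f : ℝ → ℝ) (a b : ℝ) (hab : a ≤ b)
    (hfI : Set.MapsTo f (Set.Icc a b) (Set.Icc a b)) (L : ℝ) (hL : 1 ≤ L)
    (hlip : ∀ x ∈ Set.Icc a b, ∀ y ∈ Set.Icc a b, |f x - f y| ≤ L * |x - y|)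
    (τ : ℕ) (X Y : Fin (τ + 1) → ℝ)
    (hX : ∀ i, X i ∈ Set.Icc a b) (hY : ∀ i, Y i ∈ Set.Icc a b) (n : ℕ) :
    ‖(pd f τ)^[n] X - (pd f τ)^[n] Y‖ ≤ L ^ ((n + τ) / (τ + 1)) * ‖X - Y‖ := by
  have hL0 : (0:ℝ) ≤ L := le_trans zero_le_one hL
  have hrhs : 0 ≤ L ^ ((n + τ) / (τ + 1)) * ‖X - Y‖ :=
    mul_nonneg (pow_nonneg hL0 _) (norm_nonneg _)
  apply pi_norm_le_iff_of_nonneg hrhs |>.2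
  intro i
  obtain ⟨k, j, hk, hZ⟩ := pd_structure f τ n i
  have hXY : |X j - Y j| ≤ ‖X - Y‖ := by
    calc |X j - Y j| = ‖(X - Y) j‖ := by simp [Real.norm_eq_abs]
      _ ≤ ‖X - Y‖ := norm_le_pi_norm _ j
  have h1 : ‖((pd f τ)^[n] X - (pd f τ)^[n] Y) i‖ = |f^[k] (X j) - f^[k] (Y j)| := by
    simp [hZ X, hZ Y, Real.norm_eq_abs]
  rw [h1]
  calc |f^[k] (X j) - f^[k] (Y j)| ≤ L ^ k * |X j - Y j| :=
        iter_lip f a b hfI L hL hlip k _ (hX j) _ (hY j)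
    _ ≤ L ^ ((n + τ) / (τ + 1)) * ‖X - Y‖ := by
        apply mul_le_mul (pow_le_pow_right₀ hL (le_trans hk (by apply Nat.div_le_div_right; omega)))
          hXY (abs_nonneg _) (pow_nonneg hL0 _)
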